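/- Let μ > 0, δ₀ ∈ ℝ, V(t,x) = v̲ + δ₀/√(4πμ(1+t)) exp(−x²/(4μ(1+t))), U = μ V_x. Suppose α : ℝ → ℝ satisfies |x|^{1/2}(α − α̲) ∈ L²(ℝ). Then there exists C > 0 such that for all t ≥ 0, ∫_ℝ (α(x) − α̲)² U(t,x)² dx ≤ C δ₀² (1+t)^{−5/2} ‖|x|^{1/2}(α − α̲)‖_{L²}². -/

import Mathlib

open Real MeasureTheory

/-!
Writing `r = 1 + t`, the derivative of the diffusion wave is
`U = -δ₀ x exp (-x² / (4 μ r)) / (2 r √(4 π μ r))`. The function `|x| exp (-x² / (4 μ r))` is at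
most `|x|` and, by `1 + y ≤ exp y`, at most `√(μ r)`; bounding one factor of `U²` each way gives
`U² ≤ δ₀² r^{-5/2} |x| / (16 π √μ)`, so `(α - α̲)² U²` is dominated pointwise by that constant
times `|x| (α - α̲)²`, which is integrable by assumption.
-/

lemma abs_mul_exp_neg_sq_div_le {s : ℝ} (hs : 0 < s) (x : ℝ) :
    |x| * exp (-x ^ 2 / s) ≤ √s / 2 := by
  obtain ⟨r, hr, rfl⟩ : ∃ r, 0 < r ∧ s = r ^ 2 := ⟨√s, sqrt_pos.mpr hs, (sq_sqrt hs.le).symm⟩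
  rw [sqrt_sq hr.le]
  -- AM-GM
  have hamgm : 2 * |x| ≤ r * (1 + x ^ 2 / r ^ 2) := by
    rw [← sq_abs x]
    field_simp
    nlinarith [sq_nonneg (r - |x|)]
  have hexp : 1 + x ^ 2 / r ^ 2 ≤ exp (x ^ 2 / r ^ 2) := by
    linarith [add_one_le_exp (x ^ 2 / r ^ 2)]
  rw [neg_div, exp_neg, ← div_eq_mul_inv, div_le_iff₀ (exp_pos _)]
  nlinarith

lemma deriv_const_add_mul_exp_neg_sq_div (v k s x : ℝ) :
    deriv (fun y => v + k * exp (-y ^ 2 / s)) x = k * (exp (-x ^ 2 / s) * (-(2 * x) / s)) := by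
  have h : HasDerivAt (fun y : ℝ => -y ^ 2 / s) (-(2 * x) / s) x := by
    simpa using ((hasDerivAt_pow 2 x).neg).div_const s
  exact ((h.exp.const_mul k).const_add v).deriv

lemma integral_sq_mul_sq_le {Ω : Type*} [MeasurableSpace Ω] {ν : Measure Ω} {h q w : Ω → ℝ}
    {c : ℝ} (hqh : MemLp (fun x => q x * h x) 2 ν) (hw : ∀ x, w x ^ 2 ≤ c * q x ^ 2) :
    ∫ x, h x ^ 2 * w x ^ 2 ∂ν ≤ c * ∫ x, (q x * h x) ^ 2 ∂ν := by
  rw [← integral_const_mul]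
  refine integral_mono_of_nonneg (Filter.Eventually.of_forall fun x => by positivity)
    (hqh.integrable_sq.const_mul c) (Filter.Eventually.of_forall fun x => ?_)
  calc h x ^ 2 * w x ^ 2 ≤ h x ^ 2 * (c * q x ^ 2) := by gcongr; exact hw x
    _ = c * (q x * h x) ^ 2 := by ring

lemma sq_mul_deriv_diffusionWave_le {μ r : ℝ} (hμ : 0 < μ) (hr : 0 < r) (δ₀ vbar x : ℝ) :
    (μ * deriv (fun y => vbar + δ₀ / √(4 * π * μ * r) * exp (-y ^ 2 / (4 * μ * r))) x) ^ 2 ≤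
      1 / (16 * π * √μ) * δ₀ ^ 2 * r ^ (-(5 / 2) : ℝ) * |x| := by
  have hs : 0 < 4 * μ * r := by positivity
  set g := |x| * exp (-x ^ 2 / (4 * μ * r)) with hg
  have hg_le_abs : g ≤ |x| :=
    mul_le_of_le_one_right (abs_nonneg x)
      (exp_le_one_iff.mpr (div_nonpos_of_nonpos_of_nonneg (neg_nonpos.mpr (sq_nonneg x)) hs.le))
  have hg_le : g ≤ √μ * √r := by
    have h := abs_mul_exp_neg_sq_div_le hs x
    have h4 : √(4 * μ * r) = 2 * (√μ * √r) := by
      rw [← sqrt_mul hμ.le, show 4 * μ * r = 2 ^ 2 * (μ * r) by ring, sqrt_mul (by norm_num),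
        sqrt_sq zero_le_two]
    linarith
  have hUsq : (μ * deriv (fun y => vbar + δ₀ / √(4 * π * μ * r) * exp (-y ^ 2 / (4 * μ * r))) x) ^ 2
      = δ₀ ^ 2 / (16 * π * μ * r ^ 3) * g ^ 2 := by
    rw [deriv_const_add_mul_exp_neg_sq_div, hg, mul_pow |x|, sq_abs]
    field_simp
    rw [sq_sqrt (by positivity)]
    ring
  have hg_sq : g ^ 2 ≤ √μ * √r * |x| := by
    rw [sq]
    exact mul_le_mul hg_le hg_le_abs (by positivity) (by positivity)
  have hr52 : √r / r ^ 3 = r ^ (-(5 / 2) : ℝ) := by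
    rw [sqrt_eq_rpow, ← rpow_natCast r 3, ← rpow_sub hr]
    norm_num
  calc _ = δ₀ ^ 2 / (16 * π * μ * r ^ 3) * g ^ 2 := hUsq
    _ ≤ δ₀ ^ 2 / (16 * π * μ * r ^ 3) * (√μ * √r * |x|) := by gcongr
    _ = 1 / (16 * π * √μ) * δ₀ ^ 2 * (√r / r ^ 3) * |x| := by
      have : 0 < √μ := sqrt_pos.mpr hμ
      field_simp
      rw [sq_sqrt hμ.le]
    _ = _ := by rw [hr52]

/-- Estimate of the forcing term F₂ = (α − α̲)U:
    ∫ (α − α̲)² U² dx ≤ C δ₀² (1+t)^{-5/2} ‖|x|^{1/2}(α − α̲)‖_{L²}². -/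
theorem stmt_9 (μ δ₀ vbar αbar : ℝ) (hμ : 0 < μ) (α : ℝ → ℝ)
    (hαL2 : MemLp (fun x : ℝ => |x| ^ ((1 : ℝ) / 2) * (α x - αbar)) 2 volume)
    (V U : ℝ → ℝ → ℝ)
    (hV : ∀ t x, V t x =
      vbar + δ₀ / Real.sqrt (4 * Real.pi * μ * (1 + t)) *
        Real.exp (-(x ^ 2) / (4 * μ * (1 + t))))
    (hU : ∀ t x, U t x = μ * deriv (fun y => V t y) x) :
    ∃ C > (0 : ℝ), ∀ t ≥ (0 : ℝ),
      ∫ x : ℝ, (α x - αbar) ^ 2 * (U t x) ^ 2 ≤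
        C * δ₀ ^ 2 * (1 + t) ^ (-(5 / 2) : ℝ) *
          ∫ x : ℝ, (|x| ^ ((1 : ℝ) / 2) * (α x - αbar)) ^ 2 := by
  refine ⟨1 / (16 * π * √μ), by positivity, fun t ht => integral_sq_mul_sq_le hαL2 fun x => ?_⟩
  rw [hU, funext (hV t), ← sqrt_eq_rpow, sq_sqrt (abs_nonneg x)]
  exact sq_mul_deriv_diffusionWave_le hμ (by linarith) δ₀ vbar x
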